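/- For each unordered pair {a,b} of distinct indices a, b ∈ {0,…,d}, let ω_{ab} ≥ 0 be a nonnegative weight and t_{ab} := (x_b − x_a)/|x_b − x_a| a unit tangent vector of the corresponding edge, and define the constant symmetric positive semidefinite matrix D := Σ_{a<b} ω_{ab} t_{ab} t_{ab}ᵀ. Then for any two distinct indices i ≠ j, ∫_K (D ∇ξ_j) · ∇ξ_i dλ = − ω_{ij} λ(K) / |x_i − x_j|². In particular this cross term is nonpositive, and it is independent of the chosen orientations of the tangent vectors t_{ab}. -/

import Mathlib

open MeasureTheory
open scoped RealInnerProductSpace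

/-! Since `∇ξ_k · (x_b − x_a) = δ_{kb} − δ_{ka}`, the product `(t_{ab} · ∇ξ_j) (t_{ab} · ∇ξ_i)`
vanishes unless `{a, b} = {i, j}`, where it equals `−|x_i − x_j|⁻²`. The integrand is therefore
the constant `−ω_{ij} / |x_i − x_j|²`. -/

section

variable {ι : Type*}

noncomputable def edgeIncidence [DecidableEq ι] (a b : ι) : ι → ℝ :=
  Pi.single b 1 - Pi.single a 1

theorem edgeIncidence_apply [DecidableEq ι] (a b k : ι) :
    edgeIncidence a b k = (if k = b then 1 else 0) - (if k = a then 1 else 0) := by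
  simp [edgeIncidence, Pi.single_apply]

theorem AffineBasis.inner_sub_eq_edgeIncidence {E : Type*} [DecidableEq ι]
    [NormedAddCommGroup E] [InnerProductSpace ℝ E] (bas : AffineBasis ι ℝ E) {k : ι} {v : E}
    (hv : ∀ x y, bas.coord k y - bas.coord k x = ⟪v, y - x⟫) (a b : ι) :
    ⟪v, bas b - bas a⟫ = edgeIncidence a b k := by
  rw [← hv, edgeIncidence_apply, bas.coord_apply, bas.coord_apply]

theorem sum_lt_mul_edgeIncidence_mul_edgeIncidence [Fintype ι] [LinearOrder ι]
    (f : ι → ι → ℝ) (hf : ∀ a b, f a b = f b a) {i j : ι} (hij : i ≠ j) :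
    ∑ p ∈ Finset.univ.filter (fun p : ι × ι => p.1 < p.2),
      f p.1 p.2 * (edgeIncidence p.1 p.2 j * edgeIncidence p.1 p.2 i) = -f i j := by
  wlog hlt : i < j generalizing i j
  · rw [hf, ← this hij.symm (lt_of_le_of_ne (not_lt.1 hlt) hij.symm)]
    simp only [mul_comm (edgeIncidence _ _ i)]
  rw [Finset.sum_eq_single_of_mem (i, j) (by simp [hlt])]
  · simp [edgeIncidence_apply, hij, hij.symm]
  · rintro ⟨a, b⟩ hab hne
    simp only [Finset.mem_filter, Finset.mem_univ, true_and] at hab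
    simp only [edgeIncidence_apply]
    split_ifs <;> grind

end

theorem stabilization_matrix_cross_term_general
    (d : ℕ)
    (bas : AffineBasis (Fin (d + 1)) ℝ (EuclideanSpace ℝ (Fin d)))
    (K : Set (EuclideanSpace ℝ (Fin d)))
    (g : Fin (d + 1) → EuclideanSpace ℝ (Fin d))
    (hg : ∀ i : Fin (d + 1), ∀ x y : EuclideanSpace ℝ (Fin d),
      bas.coord i y - bas.coord i x = ⟪g i, y - x⟫)
    (ω : Fin (d + 1) → Fin (d + 1) → ℝ)
    (hωsymm : ∀ a b, ω a b = ω b a)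
    (tE : Fin (d + 1) → Fin (d + 1) → EuclideanSpace ℝ (Fin d))
    (htE : ∀ a b, tE a b = ‖bas b - bas a‖⁻¹ • (bas b - bas a))
    (i j : Fin (d + 1)) (hij : i ≠ j) :
    ∫ _x in K,
        (∑ p ∈ Finset.univ.filter (fun p : Fin (d + 1) × Fin (d + 1) => p.1 < p.2),
          ω p.1 p.2 * (⟪tE p.1 p.2, g j⟫ * ⟪tE p.1 p.2, g i⟫))
      = -(ω i j) * (volume K).toReal / ‖bas i - bas j‖ ^ 2 := by
  have hinner (a b k : Fin (d + 1)) :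
      ⟪tE a b, g k⟫ = ‖bas b - bas a‖⁻¹ * edgeIncidence a b k := by
    rw [htE, real_inner_smul_left, real_inner_comm, bas.inner_sub_eq_edgeIncidence (hg k)]
  have hsum := sum_lt_mul_edgeIncidence_mul_edgeIncidence
    (fun a b => ω a b * (‖bas b - bas a‖ ^ 2)⁻¹) (fun a b => by rw [hωsymm, norm_sub_rev]) hij
  have hcross : ∑ p ∈ Finset.univ.filter (fun p : Fin (d + 1) × Fin (d + 1) => p.1 < p.2),
      ω p.1 p.2 * (⟪tE p.1 p.2, g j⟫ * ⟪tE p.1 p.2, g i⟫) = -(ω i j) / ‖bas i - bas j‖ ^ 2 := by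
    rw [norm_sub_rev, div_eq_mul_inv, neg_mul, ← hsum]
    refine Finset.sum_congr rfl fun p _ => ?_
    simp only [hinner]
    ring
  rw [setIntegral_const, hcross, smul_eq_mul, measureReal_def]
  ring

/-- **Off-diagonal entries of the stabilization diffusion matrix** (Lemma A.1 of the paper,
single-element version). With `D = Σ_{a<b} ω_{ab} t_{ab} t_{ab}ᵀ` built from nonnegative edge
weights and unit edge tangents of the simplex `K`, one has
`∫_K (D ∇ξ_j) · ∇ξ_i dλ = −ω_{ij} λ(K)/|x_i − x_j|²` for `i ≠ j`. -/
theorem stabilization_matrix_cross_term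
    (d : ℕ) (hd : 1 ≤ d)
    (bas : AffineBasis (Fin (d + 1)) ℝ (EuclideanSpace ℝ (Fin d)))
    (K : Set (EuclideanSpace ℝ (Fin d)))
    (hK : K = convexHull ℝ (Set.range ⇑bas))
    (g : Fin (d + 1) → EuclideanSpace ℝ (Fin d))
    (hg : ∀ i : Fin (d + 1), ∀ x y : EuclideanSpace ℝ (Fin d),
      bas.coord i y - bas.coord i x = ⟪g i, y - x⟫)
    (ω : Fin (d + 1) → Fin (d + 1) → ℝ)
    (hωsymm : ∀ a b, ω a b = ω b a) (hωpos : ∀ a b, 0 ≤ ω a b)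
    (tE : Fin (d + 1) → Fin (d + 1) → EuclideanSpace ℝ (Fin d))
    (htE : ∀ a b, tE a b = ‖bas b - bas a‖⁻¹ • (bas b - bas a))
    (i j : Fin (d + 1)) (hij : i ≠ j) :
    ∫ _x in K,
        (∑ p ∈ Finset.univ.filter (fun p : Fin (d + 1) × Fin (d + 1) => p.1 < p.2),
          ω p.1 p.2 * (⟪tE p.1 p.2, g j⟫ * ⟪tE p.1 p.2, g i⟫))
      = -(ω i j) * (volume K).toReal / ‖bas i - bas j‖ ^ 2 :=
  stabilization_matrix_cross_term_general d bas K g hg ω hωsymm tE htE i j hij
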